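/- Fix n ∈ ℕ, ε ∈ [0, 1/2], and 1 ≤ K ≤ 2^n. For every probability distribution P on {0,1}^n satisfying the Santha–Vazirani condition with parameter ε, the K-th Ky Fan norm of P is at most the K-th Ky Fan norm of the Bernoulli distribution B with parameter p₊ = 1/2 + ε: ‖P‖_K ≤ ‖B‖_K. -/

import Mathlib

open Finset

/-- Hamming weight of a binary string. -/
def hammingWeight {n : ℕ} (x : Fin n → Bool) : ℕ :=
  (Finset.univ.filter (fun j => x j = true)).card

/-- The Bernoulli distribution with parameter `p₊ = 1/2 + ε` on `{0,1}^n`: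
`B(x) = (1/2+ε)^(n−w(x)) (1/2−ε)^(w(x))`. -/
noncomputable def bern (n : ℕ) (ε : ℝ) (x : Fin n → Bool) : ℝ :=
  (1/2 + ε) ^ (n - hammingWeight x) * (1/2 - ε) ^ (hammingWeight x)

/-- Marginal probability of a prefix `y` of length `i` under `P`. -/
noncomputable def prefMarg {n : ℕ} (P : (Fin n → Bool) → ℝ) {i : ℕ} (h : i ≤ n)
    (y : Fin i → Bool) : ℝ :=
  ∑ x ∈ Finset.univ.filter
      (fun x : Fin n → Bool => ∀ j : Fin i, x (Fin.castLE h j) = y j), P x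

/-- `P` is a probability distribution on `{0,1}^n` satisfying the Santha–Vazirani
condition with parameter `ε`: every conditional probability of the next bit given
a prefix of positive probability lies in `[1/2−ε, 1/2+ε]`. -/
noncomputable def IsSV (n : ℕ) (ε : ℝ) (P : (Fin n → Bool) → ℝ) : Prop :=
  (∀ x, 0 ≤ P x) ∧ (∑ x, P x = 1) ∧
  ∀ (i : ℕ) (hi : i < n) (y : Fin i → Bool),
    0 < prefMarg P hi.le y → ∀ b : Bool,
      1/2 - ε ≤ prefMarg P hi (Fin.snoc y b) / prefMarg P hi.le y ∧
      prefMarg P hi (Fin.snoc y b) / prefMarg P hi.le y ≤ 1/2 + ε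

/-- The set of SV distributions with parameter `ε` on `{0,1}^n`. -/
noncomputable def SVset (n : ℕ) (ε : ℝ) : Set ((Fin n → Bool) → ℝ) :=
  {P | IsSV n ε P}

/-- The `K`-th Ky Fan norm of `Q` : the sum of the `K` largest values of `Q`
(with multiplicity), i.e. the maximal sum of `Q` over subsets of cardinality `K`. -/
noncomputable def kyFan {Z : Type*} [Fintype Z] (K : ℕ) (Q : Z → ℝ) : ℝ :=
  sSup ((fun S : Finset Z => ∑ z ∈ S, Q z) '' {S : Finset Z | S.card = K})

/-!
Induction on `n`, splitting off the first bit: for a nonnegative weight `P` whose next-bit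
conditionals are at most `p = 1/2 + ε`, we show `∑_{x ∈ S} P x ≤ (∑ P) ‖B_n‖_{|S|}`. Write
`S = 0S₀ ∪ 1S₁`; by induction the two halves contribute at most `T₀ A + T₁ B`, where `T_b` is the
mass of first bit `b` and `A, B` are the Ky Fan norms of `B_n` of orders `|S₀|, |S₁|`. As
`T_b ≤ p T`, this is at most `T (p max(A, B) + (1 - p) min(A, B))`, and placing optimal sets of
`B_n` for the two norms behind the first bits `0` and `1` of `B_{n+1}` (of masses `p` and `1 - p`)
shows that this is at most `T ‖B_{n+1}‖_{|S|}`.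
-/

section KyFan

variable {Z : Type*} [Fintype Z] {K : ℕ}

lemma sum_le_kyFan (Q : Z → ℝ) {S : Finset Z} (hS : S.card = K) :
    ∑ z ∈ S, Q z ≤ kyFan K Q :=
  le_csSup (Set.toFinite _).bddAbove ⟨S, hS, rfl⟩

lemma exists_card_eq_sum_eq_kyFan (Q : Z → ℝ) (hK : K ≤ Fintype.card Z) :
    ∃ S : Finset Z, S.card = K ∧ ∑ z ∈ S, Q z = kyFan K Q := by
  obtain ⟨S, -, hS⟩ := Finset.exists_subset_card_eq (s := Finset.univ) (by simpa using hK)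
  have hne : ((fun S : Finset Z => ∑ z ∈ S, Q z) '' {S | S.card = K}).Nonempty :=
    ⟨_, S, hS, rfl⟩
  exact hne.csSup_mem (Set.toFinite _)

lemma kyFan_le_kyFan_of_forall_sum_le {P Q : Z → ℝ}
    (h : ∀ S : Finset Z, S.card = K → ∑ z ∈ S, P z ≤ kyFan K Q) : kyFan K P ≤ kyFan K Q := by
  rcases Set.eq_empty_or_nonempty {S : Finset Z | S.card = K} with hK | hK
  · simp [kyFan, hK]
  · exact csSup_le (hK.image _) (Set.forall_mem_image.2 h)

end KyFan

section FirstBit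

variable {α M : Type*} [Fintype α] [AddCommMonoid M] {n : ℕ}

lemma sum_eq_sum_sum_cons (g : (Fin (n + 1) → α) → M) :
    ∑ z, g z = ∑ a, ∑ x, g (Fin.cons a x) := by
  rw [← (Fin.consEquiv fun _ => α).sum_comp, Fintype.sum_prod_type]
  rfl

lemma finset_sum_eq_sum_sum_cons [DecidableEq α] (g : (Fin (n + 1) → α) → M)
    (S : Finset (Fin (n + 1) → α)) :
    ∑ z ∈ S, g z = ∑ a, ∑ x ∈ Finset.univ.filter (fun x => Fin.cons a x ∈ S), g (Fin.cons a x) := by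
  rw [← Fintype.sum_ite_mem, sum_eq_sum_sum_cons]
  simp only [Finset.sum_filter]

lemma card_eq_sum_card_filter_cons [DecidableEq α] (S : Finset (Fin (n + 1) → α)) :
    S.card = ∑ a, (Finset.univ.filter (fun x => Fin.cons a x ∈ S)).card := by
  simpa only [Finset.card_eq_sum_ones] using finset_sum_eq_sum_sum_cons (fun _ => 1) S

end FirstBit

section Bernoulli

variable {n : ℕ} {ε : ℝ}

lemma hammingWeight_le (x : Fin n → Bool) : hammingWeight x ≤ n :=
  (Finset.card_filter_le _ _).trans_eq (Finset.card_fin n)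

lemma hammingWeight_cons (b : Bool) (x : Fin n → Bool) :
    hammingWeight (Fin.cons b x : Fin (n + 1) → Bool) = b.toNat + hammingWeight x := by
  simp only [hammingWeight, Finset.card_filter, Fin.sum_univ_succ, Fin.cons_zero, Fin.cons_succ]
  cases b <;> rfl

lemma bern_cons_false (x : Fin n → Bool) :
    bern (n + 1) ε (Fin.cons false x) = (1/2 + ε) * bern n ε x := by
  have := hammingWeight_le x
  rw [bern, bern, hammingWeight_cons, Bool.toNat_false, zero_add,
    show n + 1 - hammingWeight x = n - hammingWeight x + 1 by omega]
  ring

lemma bern_cons_true (x : Fin n → Bool) :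
    bern (n + 1) ε (Fin.cons true x) = (1/2 - ε) * bern n ε x := by
  rw [bern, bern, hammingWeight_cons, Bool.toNat_true,
    show n + 1 - (1 + hammingWeight x) = n - hammingWeight x by omega]
  ring

lemma bern_zero (x : Fin 0 → Bool) : bern 0 ε x = 1 := by
  simp [bern, Nat.le_zero.1 (hammingWeight_le x)]

lemma add_mul_kyFan_bern_le_kyFan_bern_succ {a b : ℕ} (ha : a ≤ 2 ^ n) (hb : b ≤ 2 ^ n) :
    (1/2 + ε) * kyFan a (bern n ε) + (1/2 - ε) * kyFan b (bern n ε)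
      ≤ kyFan (a + b) (bern (n + 1) ε) := by
  have hcard : Fintype.card (Fin n → Bool) = 2 ^ n := by simp
  obtain ⟨Sa, rfl, hSa⟩ := exists_card_eq_sum_eq_kyFan (bern n ε) (hcard ▸ ha)
  obtain ⟨Sb, rfl, hSb⟩ := exists_card_eq_sum_eq_kyFan (bern n ε) (hcard ▸ hb)
  have hdisj : Disjoint (Sa.image (Fin.cons false)) (Sb.image (Fin.cons true) :
      Finset (Fin (n + 1) → Bool)) := by
    simp only [Finset.disjoint_left, Finset.mem_image]
    rintro _ ⟨x, -, rfl⟩ ⟨y, -, hxy⟩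
    simpa using congrFun hxy 0
  have hunion : (Sa.image (Fin.cons false) ∪ Sb.image (Fin.cons true) :
      Finset (Fin (n + 1) → Bool)).card = Sa.card + Sb.card := by
    rw [Finset.card_union_of_disjoint hdisj,
      Finset.card_image_of_injective _ (Fin.cons_right_injective _),
      Finset.card_image_of_injective _ (Fin.cons_right_injective _)]
  refine le_of_eq_of_le ?_ (sum_le_kyFan _ hunion)
  rw [← hSa, ← hSb, Finset.mul_sum, Finset.mul_sum, Finset.sum_union hdisj,
    Finset.sum_image (Fin.cons_right_injective _).injOn,
    Finset.sum_image (Fin.cons_right_injective _).injOn]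
  simp only [bern_cons_false, bern_cons_true]

end Bernoulli

section NextBit

variable {n : ℕ}

/-- `P(next bit = b | prefix y) ≤ p`, with the denominator cleared so that null prefixes need no
case split. -/
def NextBitBounded (n : ℕ) (p : ℝ) (P : (Fin n → Bool) → ℝ) : Prop :=
  ∀ (i : ℕ) (hi : i < n) (y : Fin i → Bool) (b : Bool),
    prefMarg P hi (Fin.snoc y b) ≤ p * prefMarg P hi.le y

lemma prefMarg_snoc_le {P : (Fin n → Bool) → ℝ} (hP : ∀ x, 0 ≤ P x) {i : ℕ} (hi : i < n)
    (y : Fin i → Bool) (b : Bool) : prefMarg P hi (Fin.snoc y b) ≤ prefMarg P hi.le y := by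
  refine Finset.sum_le_sum_of_subset_of_nonneg ?_ fun x _ _ => hP x
  intro x
  simp only [Finset.mem_filter, Finset.mem_univ, true_and]
  intro hx j
  simpa using hx j.castSucc

lemma IsSV.nextBitBounded {ε : ℝ} {P : (Fin n → Bool) → ℝ} (hP : IsSV n ε P) :
    NextBitBounded n (1/2 + ε) P := by
  obtain ⟨hP0, -, hSV⟩ := hP
  intro i hi y b
  have hnn : 0 ≤ prefMarg P hi.le y := Finset.sum_nonneg fun x _ => hP0 x
  rcases hnn.eq_or_lt with h0 | hpos
  · rw [← h0, mul_zero, h0]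
    exact prefMarg_snoc_le hP0 hi y b
  · exact (div_le_iff₀ hpos).1 (hSV i hi y hpos b).2

lemma prefMarg_cons (P : (Fin (n + 1) → Bool) → ℝ) {i : ℕ} (h : i ≤ n) (b : Bool)
    (y : Fin i → Bool) :
    prefMarg (fun x => P (Fin.cons b x)) h y = prefMarg P (Nat.succ_le_succ h) (Fin.cons b y) := by
  simp only [prefMarg, Finset.sum_filter]
  rw [sum_eq_sum_sum_cons, Fintype.sum_bool]
  cases b <;> simp [Fin.forall_fin_succ]

lemma prefMarg_zero (P : (Fin n → Bool) → ℝ) (y : Fin 0 → Bool) :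
    prefMarg P (Nat.zero_le n) y = ∑ x, P x := by
  simp [prefMarg]

end NextBit

namespace NextBitBounded

variable {n : ℕ} {p : ℝ} {P : (Fin (n + 1) → Bool) → ℝ}

lemma cons (hP : NextBitBounded (n + 1) p P) (b : Bool) :
    NextBitBounded n p (fun x => P (Fin.cons b x)) := by
  intro i hi y c
  rw [prefMarg_cons, prefMarg_cons, Fin.cons_snoc_eq_snoc_cons]
  exact hP (i + 1) (Nat.succ_lt_succ hi) (Fin.cons b y) c

lemma sum_cons_le (hP : NextBitBounded (n + 1) p P) (b : Bool) :
    ∑ x, P (Fin.cons b x) ≤ p * ∑ x, P x := by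
  have hfirst : prefMarg P n.succ_pos (Fin.snoc Fin.elim0 b) = ∑ x, P (Fin.cons b x) := by
    rw [← prefMarg_zero (fun x => P (Fin.cons b x)) Fin.elim0, prefMarg_cons]
    congr 1
    funext j
    fin_cases j
    rfl
  have h := hP 0 n.succ_pos Fin.elim0 b
  rwa [hfirst, prefMarg_zero] at h

end NextBitBounded

lemma mul_add_mul_le_of_le_mul {p q T T₀ T₁ A B R : ℝ} (hpq : p + q = 1) (hT : T₀ + T₁ = T)
    (hT₀ : T₀ ≤ p * T) (hT₁ : T₁ ≤ p * T) (hAB : p * A + q * B ≤ R) (hBA : p * B + q * A ≤ R)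
    (hTnn : 0 ≤ T) : T₀ * A + T₁ * B ≤ T * R := by
  obtain rfl : q = 1 - p := by linarith
  subst hT
  rcases le_total A B with h | h
  · nlinarith [mul_le_mul_of_nonneg_right hT₁ (sub_nonneg.2 h), mul_le_mul_of_nonneg_left hBA hTnn]
  · nlinarith [mul_le_mul_of_nonneg_right hT₀ (sub_nonneg.2 h), mul_le_mul_of_nonneg_left hAB hTnn]

theorem sum_le_sum_mul_kyFan_bern {ε : ℝ} {n : ℕ} {P : (Fin n → Bool) → ℝ} (hP₀ : ∀ x, 0 ≤ P x)
    (hP : NextBitBounded n (1/2 + ε) P) (S : Finset (Fin n → Bool)) :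
    ∑ x ∈ S, P x ≤ (∑ x, P x) * kyFan S.card (bern n ε) := by
  induction n with
  | zero =>
    have hS : ∑ x ∈ S, P x = (∑ x, P x) * ∑ x ∈ S, bern 0 ε x := by
      rw [Finset.mul_sum]
      refine Finset.sum_congr rfl fun x _ => ?_
      rw [bern_zero, mul_one, Fintype.sum_unique]
      exact congrArg P (Subsingleton.elim _ _)
    rw [hS]
    exact mul_le_mul_of_nonneg_left (sum_le_kyFan _ rfl) (Finset.sum_nonneg fun x _ => hP₀ x)
  | succ n ih =>
    set Sb : Bool → Finset (Fin n → Bool) := fun b => Finset.univ.filter (Fin.cons b · ∈ S)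
    have hcard (b : Bool) : (Sb b).card ≤ 2 ^ n := by
      simpa using Finset.card_le_univ (Sb b)
    have hT : ∑ x, P (Fin.cons true x) + ∑ x, P (Fin.cons false x) = ∑ x, P x := by
      rw [sum_eq_sum_sum_cons P, Fintype.sum_bool]
    rw [finset_sum_eq_sum_sum_cons, card_eq_sum_card_filter_cons, Fintype.sum_bool,
      Fintype.sum_bool]
    refine (add_le_add (ih (fun x => hP₀ _) (hP.cons true) (Sb true))
      (ih (fun x => hP₀ _) (hP.cons false) (Sb false))).trans ?_
    refine mul_add_mul_le_of_le_mul (by ring) hT (hP.sum_cons_le true) (hP.sum_cons_le false)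
      (add_mul_kyFan_bern_le_kyFan_bern_succ (hcard true) (hcard false)) ?_
      (Finset.sum_nonneg fun x _ => hP₀ x)
    rw [add_comm (Sb true).card]
    exact add_mul_kyFan_bern_le_kyFan_bern_succ (hcard false) (hcard true)

theorem sv_kyFan_le_bernoulli_general
    (n : ℕ) (ε : ℝ)
    (K : ℕ)
    (P : (Fin n → Bool) → ℝ) (hP : IsSV n ε P) :
    kyFan K P ≤ kyFan K (bern n ε) := by
  refine kyFan_le_kyFan_of_forall_sum_le fun S hS => ?_
  simpa [hP.2.1, hS] using sum_le_sum_mul_kyFan_bern hP.1 hP.nextBitBounded S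

/-- among SV distributions with parameter ε, the Bernoulli distribution
with parameter p₊ = 1/2 + ε maximizes every Ky Fan norm. -/
theorem sv_kyFan_le_bernoulli
    (n : ℕ) (ε : ℝ) (hε0 : 0 ≤ ε) (hε : ε ≤ 1/2)
    (K : ℕ) (hK1 : 1 ≤ K) (hK2 : K ≤ 2 ^ n)
    (P : (Fin n → Bool) → ℝ) (hP : IsSV n ε P) :
    kyFan K P ≤ kyFan K (bern n ε) :=
  sv_kyFan_le_bernoulli_general n ε K P hP
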